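/- arXiv:2604.14929 — 5 statements merged into one kernel-verified Lean document; each statement's English description precedes it below -/
import Mathlib

section
/- For every natural number n, if X is a second countable Hausdorff topological space, then the free π_n-wild rank fwrk_n(X) is a countable ordinal. In particular, every compact metrizable space has countable free π_n-wild rank. -/
open Set Filter Topology

noncomputable section

/-- The unit `n`-sphere in `ℝ^{n+1}`. -/
def Sph (n : ℕ) : Set (EuclideanSpace ℝ (Fin (n + 1))) := Metric.sphere 0 1

/-- The basepoint `s₀ = (1,0,…,0)` of the `n`-sphere. -/
def sphBase (n : ℕ) : Sph n :=
  ⟨EuclideanSpace.single 0 1, by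
    simp [Sph, mem_sphere_iff_norm, EuclideanSpace.norm_single]⟩

/-- A map `S^n → X` is essential if it is not (freely) homotopic to any constant map. -/
def Essential {n : ℕ} {X : Type*} [TopologicalSpace X] (f : C(Sph n, X)) : Prop :=
  ∀ x : X, ¬ f.Homotopic (ContinuousMap.const _ x)

/-- A sequence of maps `S^n → X` converges to `x ∈ X` if every neighborhood of `x`
eventually contains all of their images. -/
def ConvergesTo {n : ℕ} {X : Type*} [TopologicalSpace X] (f : ℕ → C(Sph n, X)) (x : X) : Prop :=
  ∀ U ∈ 𝓝 x, ∀ᶠ k in atTop, ∀ s, f k s ∈ U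

/-- `x` is a `π_n`-wild point of `X`. -/
def IsWildPoint (n : ℕ) {X : Type*} [TopologicalSpace X] (x : X) : Prop :=
  ∃ f : ℕ → C(Sph n, X), (∀ k, Essential (f k)) ∧ (∀ k, f k (sphBase n) = x) ∧ ConvergesTo f x

/-- `x` is a free `π_n`-wild point of `X`. -/
def IsFreeWildPoint (n : ℕ) {X : Type*} [TopologicalSpace X] (x : X) : Prop :=
  ∃ f : ℕ → C(Sph n, X), (∀ k, Essential (f k)) ∧ ConvergesTo f x

/-- The `π_n`-wild set of a space `X`. -/
def wildSet (n : ℕ) (X : Type*) [TopologicalSpace X] : Set X := {x | IsWildPoint n x}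

/-- The free `π_n`-wild set of a space `X`. -/
def freeWildSet (n : ℕ) (X : Type*) [TopologicalSpace X] : Set X := {x | IsFreeWildPoint n x}

/-- The `π_n`-wild set of a subset `S ⊆ X`, computed in the subspace topology,
regarded again as a subset of `X`. -/
def wildSub (n : ℕ) {X : Type*} [TopologicalSpace X] (S : Set X) : Set X :=
  Subtype.val '' wildSet n ↥S

def freeWildSub (n : ℕ) {X : Type*} [TopologicalSpace X] (S : Set X) : Set X :=
  Subtype.val '' freeWildSet n ↥S

/-- The transfinitely iterated `π_n`-wild sets of `X`. -/
def iterWild (n : ℕ) (X : Type*) [TopologicalSpace X] (κ : Ordinal) : Set X :=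
  Ordinal.limitRecOn (motive := fun _ => Set X) κ Set.univ (fun _ ih => wildSub n ih)
    (fun κ _ ih => ⋂ (o : Ordinal) (h : o < κ), ih o h)

/-- The transfinitely iterated free `π_n`-wild sets of `X`. -/
def iterFreeWild (n : ℕ) (X : Type*) [TopologicalSpace X] (κ : Ordinal) : Set X :=
  Ordinal.limitRecOn (motive := fun _ => Set X) κ Set.univ (fun _ ih => freeWildSub n ih)
    (fun κ _ ih => ⋂ (o : Ordinal) (h : o < κ), ih o h)

/-- The `π_n`-wild rank of `X`: the least ordinal `κ` with `w_n^{κ+1}(X) = w_n^κ(X)`. -/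
def wrk (n : ℕ) (X : Type*) [TopologicalSpace X] : Ordinal :=
  sInf {κ | iterWild n X (κ + 1) = iterWild n X κ}

/-- The free `π_n`-wild rank of `X`. -/
def fwrk (n : ℕ) (X : Type*) [TopologicalSpace X] : Ordinal :=
  sInf {κ | iterFreeWild n X (κ + 1) = iterFreeWild n X κ}

section MyAux

variable {n : ℕ}

/-- Forward direction of the neighborhood characterization of free wild points. -/
theorem myFW_forward {Y : Type*} [TopologicalSpace Y] {x : Y} (h : IsFreeWildPoint n x) :
    ∀ U ∈ 𝓝 x, ∃ f : C(Sph n, Y), Essential f ∧ ∀ s, f s ∈ U := by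
  obtain ⟨f, hf, hconv⟩ := h
  intro U hU
  obtain ⟨k, hk⟩ := (hconv U hU).exists
  exact ⟨f k, hf k, hk⟩

/-- Backward direction, assuming first countability. -/
theorem myFW_backward {Y : Type*} [TopologicalSpace Y] [FirstCountableTopology Y] {x : Y}
    (h : ∀ U ∈ 𝓝 x, ∃ f : C(Sph n, Y), Essential f ∧ ∀ s, f s ∈ U) :
    IsFreeWildPoint n x := by
  obtain ⟨U, hU⟩ := (𝓝 x).exists_antitone_basis
  choose f hf hfU using fun j => h (U j) (hU.1.mem_of_mem trivial)
  refine ⟨f, hf, ?_⟩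
  intro W hW
  obtain ⟨j₀, -, hj₀⟩ := hU.1.mem_iff.mp hW
  filter_upwards [eventually_ge_atTop j₀] with j hj s
  exact hj₀ (hU.2 hj (hfU j s))

/-- The free wild set of a first countable space is closed. -/
theorem myFW_isClosed {Y : Type*} [TopologicalSpace Y] [FirstCountableTopology Y] :
    IsClosed (freeWildSet n Y) := by
  rw [← isOpen_compl_iff, isOpen_iff_mem_nhds]
  intro x hx
  by_contra hmem
  apply hx
  show IsFreeWildPoint n x
  apply myFW_backward
  intro U hU
  have hxi : x ∈ interior U := mem_interior_iff_mem_nhds.mpr hU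
  have hne : ¬ interior U ⊆ (freeWildSet n Y)ᶜ := by
    intro hsub
    exact hmem (mem_of_superset (isOpen_interior.mem_nhds hxi) hsub)
  obtain ⟨y, hyU, hyW⟩ := not_subset.mp hne
  rw [notMem_compl_iff] at hyW
  obtain ⟨f, hfe, hfs⟩ := myFW_forward hyW (interior U) (isOpen_interior.mem_nhds hyU)
  exact ⟨f, hfe, fun s => interior_subset (hfs s)⟩

theorem myFWS_subset {X : Type*} [TopologicalSpace X] (S : Set X) : freeWildSub n S ⊆ S := by
  rintro x ⟨y, -, rfl⟩; exact y.2

theorem myFWS_isClosed {X : Type*} [TopologicalSpace X] [SecondCountableTopology X]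
    {S : Set X} (hS : IsClosed S) : IsClosed (freeWildSub n S) :=
  hS.isClosedEmbedding_subtypeVal.isClosedMap _ myFW_isClosed

theorem myIter_zero (X : Type*) [TopologicalSpace X] : iterFreeWild n X 0 = Set.univ :=
  Ordinal.limitRecOn_zero ..

theorem myIter_succ (X : Type*) [TopologicalSpace X] (κ : Ordinal) :
    iterFreeWild n X (κ + 1) = freeWildSub n (iterFreeWild n X κ) := by
  rw [iterFreeWild, Ordinal.add_one_eq_succ, Ordinal.limitRecOn_succ]; rfl

theorem myIter_limit (X : Type*) [TopologicalSpace X] {κ : Ordinal} (hκ : Order.IsSuccLimit κ) :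
    iterFreeWild n X κ = ⋂ (o : Ordinal) (_ : o < κ), iterFreeWild n X o := by
  rw [iterFreeWild, Ordinal.limitRecOn_limit _ _ _ _ hκ]; rfl

theorem myIter_antitone (X : Type*) [TopologicalSpace X] (κ : Ordinal) :
    ∀ l ≤ κ, iterFreeWild n X κ ⊆ iterFreeWild n X l := by
  induction κ using Ordinal.limitRecOn with
  | zero =>
    intro l hl
    rw [nonpos_iff_eq_zero.mp hl]
  | add_one κ ih =>
    intro l hl
    rcases le_or_gt l κ with h | h
    · exact ((myIter_succ X κ).le.trans (myFWS_subset _)).trans (ih l h)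
    · have : l = κ + 1 := le_antisymm hl (by rw [Ordinal.add_one_eq_succ]; exact Order.succ_le_of_lt h)
      rw [this]
  | limit κ hκ ih =>
    intro l hl
    rcases eq_or_lt_of_le hl with rfl | h
    · exact subset_rfl
    · rw [myIter_limit X hκ]
      exact iInter_subset_of_subset l (iInter_subset _ h)

theorem myIter_isClosed (X : Type*) [TopologicalSpace X] [SecondCountableTopology X]
    (κ : Ordinal) : IsClosed (iterFreeWild n X κ) := by
  induction κ using Ordinal.limitRecOn with
  | zero => rw [myIter_zero]; exact isClosed_univ
  | add_one κ ih =>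
    rw [myIter_succ]
    exact myFWS_isClosed ih
  | limit κ hκ ih =>
    rw [myIter_limit X hκ]
    exact isClosed_iInter fun o => isClosed_iInter fun ho => ih o ho

theorem myIter_stab (X : Type*) [TopologicalSpace X] {κ : Ordinal}
    (h : iterFreeWild n X (κ + 1) = iterFreeWild n X κ) :
    ∀ l, κ ≤ l → iterFreeWild n X l = iterFreeWild n X κ := by
  intro l
  induction l using Ordinal.limitRecOn with
  | zero => intro hl; rw [nonpos_iff_eq_zero.mp hl]
  | add_one l ih =>
    intro hl
    rcases le_or_gt κ l with h' | h'
    · rw [myIter_succ, ih h', ← myIter_succ, h]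
    · have : κ = l + 1 := le_antisymm hl (by rw [Ordinal.add_one_eq_succ]; exact Order.succ_le_of_lt h')
      rw [this]
  | limit l hl ih =>
    intro hκl
    rcases eq_or_lt_of_le hκl with rfl | h'
    · rfl
    · apply subset_antisymm
      · rw [myIter_limit X hl]
        exact iInter_subset_of_subset κ (iInter_subset _ h')
      · rw [myIter_limit X hl]
        refine subset_iInter fun o => subset_iInter fun ho => ?_
        rcases le_or_gt κ o with h'' | h''
        · rw [ih o ho h'']
        · exact myIter_antitone X κ o h''.le

/-- Main lemma: in a second countable space the iteration stabilizes at a countable stage. -/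
theorem myMain (X : Type) [TopologicalSpace X] [SecondCountableTopology X] :
    (fwrk n X).card ≤ Cardinal.aleph0 := by
  have key : ∃ κ : Ordinal, κ < (Cardinal.aleph 1).ord ∧
      iterFreeWild n X (κ + 1) = iterFreeWild n X κ := by
    by_contra hcon
    push_neg at hcon
    obtain ⟨b, hbc, -, hbB⟩ := TopologicalSpace.exists_countable_basis X
    haveI : Countable b := hbc.to_subtype
    set ω₁ : Ordinal := (Cardinal.aleph 1).ord with hω₁
    have hne : ∀ κ : Iio ω₁, (iterFreeWild n X κ.1 \ iterFreeWild n X (κ.1 + 1)).Nonempty := by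
      rintro ⟨κ, hκ⟩
      rw [Set.diff_nonempty]
      intro hsub
      exact hcon κ hκ (le_antisymm
        ((myIter_succ X κ).le.trans (myFWS_subset _)) hsub)
    choose x hx₁ hx₂ using fun κ => (hne κ)
    have hx₂' : ∀ κ : Iio ω₁, x κ ∈ (iterFreeWild n X (κ.1 + 1))ᶜ := hx₂
    have hopen : ∀ κ : Iio ω₁, IsOpen (iterFreeWild n X (κ.1 + 1))ᶜ :=
      fun κ => (myIter_isClosed X _).isOpen_compl
    choose U hUb hxU hUsub using fun κ : Iio ω₁ =>
      hbB.exists_subset_of_mem_open (hx₂' κ) (hopen κ)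
    have hinj : Function.Injective fun κ : Iio ω₁ => (⟨U κ, hUb κ⟩ : b) := by
      intro κ l hUeq
      simp only [Subtype.mk.injEq] at hUeq
      by_contra hne'
      rcases lt_or_gt_of_ne (fun h => hne' (Subtype.ext h)) with h | h
      · -- κ < l : x l ∈ F l ⊆ F (κ+1), but x l ∈ U l = U κ ⊆ (F (κ+1))ᶜ
        have h1 : x l ∈ iterFreeWild n X (κ.1 + 1) :=
          myIter_antitone X l.1 (κ.1 + 1) (by rw [Ordinal.add_one_eq_succ]; exact Order.succ_le_of_lt h) (hx₁ l)
        exact (hUsub κ (hUeq ▸ hxU l)) h1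
      · have h1 : x κ ∈ iterFreeWild n X (l.1 + 1) :=
          myIter_antitone X κ.1 (l.1 + 1) (by rw [Ordinal.add_one_eq_succ]; exact Order.succ_le_of_lt h) (hx₁ κ)
        exact (hUsub l (hUeq ▸ hxU κ)) h1
    -- transport along Iio ω₁ ≃ ω₁.ToType to fix universes
    have hinj2 : Function.Injective
        (fun t : ω₁.ToType => (⟨U ((Ordinal.ToType.mk (o := ω₁)).symm t), hUb _⟩ : b)) :=
      fun t s h => (Ordinal.ToType.mk (o := ω₁)).symm.injective (hinj h)
    haveI hct : Countable ω₁.ToType := hinj2.countable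
    have hcard : (Cardinal.mk ω₁.ToType) ≤ Cardinal.aleph0 := Cardinal.mk_le_aleph0
    rw [Cardinal.mk_toType, hω₁, Cardinal.card_ord] at hcard
    exact absurd hcard (not_le.mpr Cardinal.aleph0_lt_aleph_one)
  obtain ⟨κ, hκ, hfix⟩ := key
  have h1 : fwrk n X ≤ κ := csInf_le (OrderBot.bddBelow _) hfix
  have h2 : (fwrk n X).card ≤ κ.card := Ordinal.card_le_card h1
  have h3 : κ.card < Cardinal.aleph 1 := Cardinal.lt_ord.mp hκ
  rw [← Cardinal.succ_aleph0, Order.lt_succ_iff] at h3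
  exact h2.trans h3

end MyAux

/-- For every `n`, every second countable Hausdorff space has countable
free `π_n`-wild rank; in particular, every compact metrizable space has countable free
`π_n`-wild rank. -/
theorem statement2 (n : ℕ) :
    (∀ (X : Type) [TopologicalSpace X] [SecondCountableTopology X] [T2Space X],
      (fwrk n X).card ≤ Cardinal.aleph0) ∧
    (∀ (X : Type) [TopologicalSpace X] [CompactSpace X] [TopologicalSpace.MetrizableSpace X],
      (fwrk n X).card ≤ Cardinal.aleph0) := by
  constructor
  · intro X _ _ _
    exact myMain X
  · intro X _ _ _
    letI : MetricSpace X := TopologicalSpace.metrizableSpaceMetric X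
    haveI : SecondCountableTopology X := inferInstance
    exact myMain X
end
end

section
/- If X is a second countable Hausdorff topological space, then the π_0-wild rank wrk_0(X) is a countable ordinal. -/
open Set Filter Topology

noncomputable section

/-! ### Auxiliary lemmas -/

section Aux

/-- The second point of the 0-sphere. -/
def sphNeg : Sph 0 :=
  ⟨EuclideanSpace.single 0 (-1), by
    simp [Sph, mem_sphere_iff_norm, EuclideanSpace.norm_single]⟩

lemma sph0_cases (u : Sph 0) : u = sphBase 0 ∨ u = sphNeg := by
  obtain ⟨v, hv⟩ := u
  have hnorm : ‖v‖ = 1 := by simpa [Sph, mem_sphere_iff_norm] using hv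
  have h0 : |v 0| = 1 := by
    rw [EuclideanSpace.norm_eq] at hnorm
    simpa [Fin.sum_univ_one, Real.sqrt_sq_eq_abs] using hnorm
  have hv0 : v 0 = 1 ∨ v 0 = -1 := abs_eq (by norm_num) |>.mp h0
  have hfun : ∀ (a : ℝ), v 0 = a → v = EuclideanSpace.single 0 a := by
    intro a ha; ext i; fin_cases i; simpa using ha
  rcases hv0 with h | h
  · left; exact Subtype.ext (hfun 1 h)
  · right; exact Subtype.ext (hfun (-1) h)

lemma sphBase_ne_sphNeg : sphBase 0 ≠ sphNeg := by
  intro h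
  have := congrArg (fun p : Sph 0 => (p : EuclideanSpace ℝ (Fin (0 + 1))) 0) h
  simp [sphBase, sphNeg] at this
  norm_num at this

instance : Finite (Sph 0) := by
  have : (Sph 0 : Set _) ⊆
      {(sphBase 0 : EuclideanSpace ℝ (Fin 1)), (sphNeg : EuclideanSpace ℝ (Fin 1))} := by
    intro v hv
    rcases sph0_cases ⟨v, hv⟩ with h | h <;> simp [Subtype.ext_iff] at h <;> simp [h]
  exact (Set.Finite.subset ((Set.finite_singleton _).insert _) this).to_subtype

instance : DiscreteTopology (Sph 0) := by infer_instance

variable {X : Type*} [TopologicalSpace X]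

/-- From a homotopy to a constant map, extract a path. -/
def pathOfHomotopy {f : C(Sph 0, X)} {c : X} (F : f.Homotopy (ContinuousMap.const _ c))
    (s : Sph 0) : Path (f s) c where
  toFun t := F (t, s)
  continuous_toFun := F.continuous.comp (continuous_id.prodMk continuous_const)
  source' := F.map_zero_left s
  target' := F.map_one_left s

lemma essential_iff (f : C(Sph 0, X)) :
    Essential f ↔ f sphNeg ∉ pathComponent (f (sphBase 0)) := by
  constructor
  · intro h hc
    obtain ⟨γ⟩ := hc
    apply h (f (sphBase 0))
    constructor
    classical
    set g : Sph 0 → C(unitInterval, X) := fun s =>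
      if s = sphBase 0 then (Path.refl (f (sphBase 0))).toContinuousMap
      else γ.symm.toContinuousMap with hg
    refine ⟨⟨fun p => g p.2 p.1, ?_⟩, ?_, ?_⟩
    · show Continuous fun p : unitInterval × (Sph 0) => (g p.2) p.1
      have hgc : Continuous g := continuous_of_discreteTopology
      exact ContinuousEval.continuous_eval.comp ((hgc.comp continuous_snd).prodMk continuous_fst)
    · intro s
      rcases sph0_cases s with rfl | rfl
      · simp [hg]
      · simp [hg, sphBase_ne_sphNeg.symm]
    · intro s
      rcases sph0_cases s with rfl | rfl
      · simp [hg]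
      · simp [hg, sphBase_ne_sphNeg.symm]
  · intro h x ⟨F⟩
    exact h ⟨(pathOfHomotopy F (sphBase 0)).trans (pathOfHomotopy F sphNeg).symm⟩

lemma isWildPoint_iff [FirstCountableTopology X] (x : X) :
    IsWildPoint 0 x ↔ x ∈ closure (pathComponent x)ᶜ := by
  constructor
  · rintro ⟨f, hess, hbase, hconv⟩
    rw [mem_closure_iff_nhds]
    intro U hU
    obtain ⟨k, hk⟩ := (hconv U hU).exists
    refine ⟨f k sphNeg, hk sphNeg, ?_⟩
    have := (essential_iff (f k)).mp (hess k)
    rwa [hbase k] at this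
  · intro hx
    obtain ⟨u, hu⟩ := (𝓝 x).exists_antitone_basis
    have hy : ∀ k : ℕ, ∃ y, y ∈ u k ∧ y ∈ (pathComponent x)ᶜ := by
      intro k
      have := mem_closure_iff_nhds.mp hx (u k) (hu.mem k)
      exact ⟨this.choose, this.choose_spec.1, this.choose_spec.2⟩
    choose y hy1 hy2 using hy
    classical
    refine ⟨fun k => ⟨fun s => if s = sphBase 0 then x else y k,
      continuous_of_discreteTopology⟩, ?_, ?_, ?_⟩
    · intro k
      rw [essential_iff]
      simpa [sphBase_ne_sphNeg.symm] using hy2 k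
    · intro k; simp
    · intro U hU
      obtain ⟨N, -, hN⟩ := (hu.toHasBasis.mem_iff.mp hU)
      filter_upwards [eventually_ge_atTop N] with k hk s
      rcases sph0_cases s with rfl | rfl
      · simpa using mem_of_mem_nhds hU
      · simpa [sphBase_ne_sphNeg.symm] using hN (hu.antitone hk (hy1 k))

lemma isClosed_wildSet [FirstCountableTopology X] : IsClosed (wildSet 0 X) := by
  rw [← isOpen_compl_iff, isOpen_iff_forall_mem_open]
  intro x hx
  refine ⟨(closure (pathComponent x)ᶜ)ᶜ, ?_, isOpen_compl_iff.2 isClosed_closure, ?_⟩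
  · intro z hz
    simp only [mem_compl_iff, wildSet, mem_setOf_eq] at *
    intro hzw
    have hz' : z ∈ pathComponent x := by
      by_contra h; exact hz (subset_closure h)
    rw [isWildPoint_iff, pathComponent_congr hz'] at hzw
    exact hz hzw
  · simp only [mem_compl_iff, wildSet, mem_setOf_eq] at hx
    simpa [isWildPoint_iff] using hx

lemma wildSub_subset (n : ℕ) (S : Set X) : wildSub n S ⊆ S :=
  Subtype.coe_image_subset _ _

lemma isClosed_wildSub [FirstCountableTopology X] {S : Set X} (hS : IsClosed S) :
    IsClosed (wildSub 0 S) :=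
  (hS.isClosedEmbedding_subtypeVal.isClosedMap) _ isClosed_wildSet

lemma iterWild_zero (n : ℕ) : iterWild n X 0 = Set.univ :=
  Ordinal.limitRecOn_zero _ _ _

lemma iterWild_succ (n : ℕ) (κ : Ordinal) :
    iterWild n X (κ + 1) = wildSub n (iterWild n X κ) := by
  rw [iterWild, Ordinal.add_one_eq_succ, Ordinal.limitRecOn_succ]
  rfl

lemma iterWild_limit (n : ℕ) {κ : Ordinal} (h : Order.IsSuccLimit κ) :
    iterWild n X κ = ⋂ (o : Ordinal) (_ : o < κ), iterWild n X o :=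
  Ordinal.limitRecOn_limit _ _ _ _ h

lemma iterWild_antitone (n : ℕ) : ∀ {κ l : Ordinal}, l ≤ κ →
    iterWild n X κ ⊆ iterWild n X l := by
  intro κ
  induction κ using Ordinal.limitRecOn with
  | zero =>
    intro l hl
    obtain rfl : l = 0 := le_antisymm hl (zero_le (a := l))
    exact subset_rfl
  | add_one κ ih =>
    intro l hl
    rcases eq_or_lt_of_le hl with rfl | hlt
    · exact subset_rfl
    · have hl' : l ≤ κ := Order.lt_add_one_iff.mp hlt
      rw [iterWild_succ]
      exact (wildSub_subset n _).trans (ih hl')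
  | limit κ hκ ih =>
    intro l hl
    rcases eq_or_lt_of_le hl with rfl | hlt
    · exact subset_rfl
    · rw [iterWild_limit n hκ]
      exact Set.iInter₂_subset l hlt

lemma isClosed_iterWild [FirstCountableTopology X] (κ : Ordinal) :
    IsClosed (iterWild 0 X κ) := by
  induction κ using Ordinal.limitRecOn with
  | zero => rw [iterWild_zero]; exact isClosed_univ
  | add_one κ ih => rw [iterWild_succ]; exact isClosed_wildSub ih
  | limit κ hκ ih =>
    rw [iterWild_limit 0 hκ]
    exact isClosed_iInter fun o => isClosed_iInter fun h => ih o h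

end Aux

/-- If `X` is second countable and Hausdorff, then the `π_0`-wild rank
`wrk_0(X)` is a countable ordinal. -/
theorem statement3 (X : Type) [TopologicalSpace X] [SecondCountableTopology X] [T2Space X] :
    (wrk 0 X).card ≤ Cardinal.aleph0 := by
  by_contra hmain
  have hcon : ∀ κ : Ordinal, κ.card < Cardinal.aleph 1 →
      iterWild 0 X (κ + 1) ≠ iterWild 0 X κ := by
    intro κ hκ hfix
    apply hmain
    have h1 : wrk 0 X ≤ κ := csInf_le' hfix
    calc (wrk 0 X).card ≤ κ.card := Ordinal.card_le_card h1
      _ ≤ Cardinal.aleph0 := by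
          rw [← Cardinal.succ_aleph0] at hκ
          exact Order.lt_succ_iff.mp hκ
  have hchoose : ∀ o : Set.Iio (Cardinal.aleph 1).ord,
      ∃ U ∈ TopologicalSpace.countableBasis X,
        (U ∩ iterWild 0 X o).Nonempty ∧ U ∩ iterWild 0 X ((o : Ordinal) + 1) = ∅ := by
    rintro ⟨o, ho⟩
    have hne := hcon o (Cardinal.lt_ord.mp ho)
    have hsub : iterWild 0 X (o + 1) ⊆ iterWild 0 X o :=
      iterWild_antitone 0 (le_self_add)
    have hss : iterWild 0 X (o + 1) ⊂ iterWild 0 X o := hsub.ssubset_of_ne hne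
    obtain ⟨x, hx1, hx2⟩ := exists_of_ssubset hss
    have hop : IsOpen (iterWild 0 X (o + 1))ᶜ := (isClosed_iterWild _).isOpen_compl
    obtain ⟨U, hUB, hxU, hUsub⟩ :=
      (TopologicalSpace.isBasis_countableBasis X).exists_subset_of_mem_open hx2 hop
    exact ⟨U, hUB, ⟨x, hxU, hx1⟩,
      (Set.subset_compl_iff_disjoint_right.mp hUsub).inter_eq⟩
  choose U hUB hUne hUdisj using hchoose
  have key2 : ∀ a b : Set.Iio (Cardinal.aleph 1).ord, (a : Ordinal) < b → U a ≠ U b := by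
    intro a b hab heq
    obtain ⟨x, hxU, hxI⟩ := hUne b
    have hx1 : x ∈ iterWild 0 X ((a : Ordinal) + 1) :=
      iterWild_antitone 0 (by rw [Ordinal.add_one_eq_succ]; exact Order.succ_le_of_lt hab) hxI
    have : x ∈ U a ∩ iterWild 0 X ((a : Ordinal) + 1) := ⟨heq ▸ hxU, hx1⟩
    rw [hUdisj a] at this
    exact this
  have hinj : Function.Injective (fun o : Set.Iio (Cardinal.aleph 1).ord =>
      (⟨U o, hUB o⟩ : ↥(TopologicalSpace.countableBasis X))) := by
    intro a b hab
    simp only [Subtype.mk.injEq] at hab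
    by_contra hne
    have hne' : (a : Ordinal) ≠ (b : Ordinal) := fun h => hne (Subtype.ext h)
    rcases hne'.lt_or_gt with h | h
    · exact key2 a b h hab
    · exact key2 b a h hab.symm
  have hcard := Cardinal.lift_mk_le'.mpr ⟨⟨_, hinj⟩⟩
  rw [Ordinal.mk_Iio_ordinal, Cardinal.card_ord, Cardinal.lift_lift] at hcard
  have hB : Cardinal.mk (↥(TopologicalSpace.countableBasis X)) ≤ Cardinal.aleph0 := by
    have := (TopologicalSpace.countable_countableBasis X).to_subtype
    exact Cardinal.mk_le_aleph0
  have h2 := hcard.trans ((Cardinal.lift_le.mpr hB).trans_eq Cardinal.lift_aleph0)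
  have h3 := Cardinal.lift_lt.mpr Cardinal.aleph0_lt_aleph_one
  rw [Cardinal.lift_aleph0] at h3
  exact absurd h2 (not_le.mpr h3)
end
end

section
/- For every topological space X, the π_0-wild set equals the free π_0-wild set: w_0(X) = fw_0(X) as subsets of X. -/
open Set Filter Topology

noncomputable section

-- auxiliary
def ptA : Sph 0 := sphBase 0

def ptB : Sph 0 :=
  ⟨EuclideanSpace.single 0 (-1), by
    simp [Sph, mem_sphere_iff_norm, EuclideanSpace.norm_single]⟩

lemma sph0_eq_or_eq (s : Sph 0) : s = ptA ∨ s = ptB := by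
  obtain ⟨v, hv⟩ := s
  have hnorm : ‖v‖ = 1 := by simpa [Sph] using hv
  have habs : |v 0| = 1 := by
    rw [EuclideanSpace.norm_eq, Fin.sum_univ_one, Real.norm_eq_abs,
      Real.sqrt_sq_eq_abs, abs_abs] at hnorm
    exact hnorm
  have hv' : ∀ c : ℝ, v 0 = c → v = EuclideanSpace.single 0 c := by
    intro c hc
    ext i
    fin_cases i
    simpa [EuclideanSpace.single_apply] using hc
  rcases abs_eq (by norm_num : (0:ℝ) ≤ 1) |>.1 habs with h | h
  · exact Or.inl (Subtype.ext (hv' 1 h))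
  · exact Or.inr (Subtype.ext (hv' (-1) h))

lemma ptB_ne_ptA : ptB ≠ ptA := by
  intro h
  have := congrArg (fun w : EuclideanSpace ℝ (Fin (0 + 1)) => w 0) (congrArg Subtype.val h)
  simp [ptA, ptB, sphBase, EuclideanSpace.single_apply] at this
  norm_num at this

instance inst_s4 : Finite (Sph 0) := by
  refine Finite.of_surjective (fun b : Bool => if b then ptA else ptB) ?_
  intro s
  rcases sph0_eq_or_eq s with h | h
  · exact ⟨true, h.symm⟩
  · exact ⟨false, h.symm⟩

lemma homotopic_of_joined {X : Type*} [TopologicalSpace X] (g h : C(Sph 0, X))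
    (hA : Joined (g ptA) (h ptA)) (hB : Joined (g ptB) (h ptB)) : g.Homotopic h := by
  classical
  obtain ⟨γa⟩ := hA
  obtain ⟨γb⟩ := hB
  set Γ : Sph 0 → C(unitInterval, X) :=
    fun s => if s = ptA then γa.toContinuousMap else γb.toContinuousMap with hΓ
  have hcont : Continuous fun p : unitInterval × Sph 0 => Γ p.2 p.1 := by
    have h1 : Continuous Γ := continuous_of_discreteTopology
    exact continuous_eval.comp ((h1.comp continuous_snd).prodMk continuous_fst)
  refine ⟨⟨⟨fun p => Γ p.2 p.1, hcont⟩, ?_, ?_⟩⟩ <;> intro s <;>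
    rcases sph0_eq_or_eq s with rfl | rfl <;>
      simp [hΓ, ptB_ne_ptA]

lemma essential_iff_s4 {X : Type*} [TopologicalSpace X] (g : C(Sph 0, X)) :
    Essential g ↔ ¬ Joined (g ptA) (g ptB) := by
  constructor
  · intro he hj
    exact he (g ptA) (homotopic_of_joined g (ContinuousMap.const _ (g ptA)) (Joined.refl _) hj.symm)
  · intro hnj x hhom
    obtain ⟨H⟩ := hhom
    have ja : Joined (g ptA) x := ⟨H.evalAt ptA⟩
    have jb : Joined (g ptB) x := ⟨H.evalAt ptB⟩
    exact hnj (ja.trans jb.symm)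

/-- For every topological space `X`, `w_0(X) = fw_0(X)`. -/
theorem statement4 (X : Type*) [TopologicalSpace X] :
    wildSet 0 X = freeWildSet 0 X := by
  classical
  ext x
  simp only [wildSet, freeWildSet, mem_setOf_eq, IsWildPoint, IsFreeWildPoint]
  constructor
  · rintro ⟨f, h1, _, h3⟩
    exact ⟨f, h1, h3⟩
  · rintro ⟨f, h1, h3⟩
    have hnj : ∀ k, ¬ Joined (f k ptA) (f k ptB) := fun k => (essential_iff_s4 _).1 (h1 k)
    set y : ℕ → X := fun k => if Joined x (f k ptA) then f k ptB else f k ptA with hy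
    have hny : ∀ k, ¬ Joined x (y k) := by
      intro k
      by_cases h : Joined x (f k ptA)
      · simp only [hy, if_pos h]
        intro h2
        exact hnj k (h.symm.trans h2)
      · simpa [hy, if_neg h] using h
    set g : ℕ → C(Sph 0, X) :=
      fun k => ⟨fun s => if s = ptA then x else y k, continuous_of_discreteTopology⟩ with hg
    refine ⟨g, ?_, ?_, ?_⟩
    · intro k
      rw [essential_iff_s4]
      have e1 : g k ptA = x := if_pos rfl
      have e2 : g k ptB = y k := if_neg ptB_ne_ptA
      rw [e1, e2]
      exact hny k
    · intro k
      exact if_pos rfl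
    · intro U hU
      have hx : x ∈ U := mem_of_mem_nhds hU
      filter_upwards [h3 U hU] with k hk
      intro s
      have hyU : y k ∈ U := by
        simp only [hy]
        split <;> exact hk _
      show (if s = ptA then x else y k) ∈ U
      split <;> assumption
end
end

section
/- For every natural number n, if X is a first countable topological space, then the free π_n-wild set fw_n(X) is a closed subset of X. -/
open Set Filter Topology

noncomputable section

/-- If `X` is first countable then `fw_n(X)` is closed in `X`. -/
theorem statement5 (n : ℕ) (X : Type*) [TopologicalSpace X]
    [FirstCountableTopology X] :
    IsClosed (freeWildSet n X) := by
  apply isClosed_of_closure_subset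
  intro x hx
  obtain ⟨U, hU⟩ := (𝓝 x).exists_antitone_basis
  have hUopen : ∀ k, interior (U k) ∈ 𝓝 x := fun k => interior_mem_nhds.2 (hU.mem k)
  have hy : ∀ k : ℕ, ∃ y, y ∈ interior (U k) ∧ y ∈ freeWildSet n X := by
    intro k
    exact mem_closure_iff_nhds.mp hx (interior (U k)) (hUopen k)
  choose y hy1 hy2 using hy
  have hf : ∀ k, ∃ f : C(Sph n, X), Essential f ∧ ∀ s, f s ∈ U k := by
    intro k
    obtain ⟨g, hg1, hg2⟩ := hy2 k
    have hnb : interior (U k) ∈ 𝓝 (y k) := isOpen_interior.mem_nhds (hy1 k)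
    obtain ⟨j, hj⟩ := (hg2 (interior (U k)) hnb).exists
    exact ⟨g j, hg1 j, fun s => interior_subset (hj s)⟩
  choose f hf1 hf2 using hf
  refine ⟨f, hf1, ?_⟩
  intro V hV
  obtain ⟨k0, -, hk0⟩ := hU.toHasBasis.mem_iff.mp hV
  filter_upwards [eventually_ge_atTop k0] with k hk
  exact fun s => hk0 (hU.antitone hk (hf2 k s))
end
end

section
/- For every natural number n ≥ 1, if X is a first countable, locally path-connected topological space, then the π_n-wild set equals the free π_n-wild set: w_n(X) = fw_n(X) as subsets of X. -/
open Set Filter Topology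

noncomputable section

namespace WildAux

open unitInterval

variable {n : ℕ}

lemma sph_sum_sq (s : Sph n) : ∑ i, (s.1 i) ^ 2 = 1 := by
  have h : ‖(s.1 : EuclideanSpace ℝ (Fin (n + 1)))‖ = 1 := by
    have := s.2
    simpa [Sph, mem_sphere_iff_norm] using this
  rw [EuclideanSpace.norm_eq, Real.sqrt_eq_one] at h
  simpa [Real.norm_eq_abs, sq_abs] using h

lemma sum_erase_sq (s : Sph n) :
    ∑ i ∈ Finset.univ.erase 0, (s.1 i) ^ 2 = 1 - (s.1 0) ^ 2 := by
  have h := sph_sum_sq s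
  have h2 := Finset.add_sum_erase Finset.univ (fun i => (s.1 i) ^ 2) (Finset.mem_univ 0)
  simp only at h2
  linarith

lemma coord_sq_le (s : Sph n) {i : Fin (n + 1)} (hi : i ≠ 0) :
    (s.1 i) ^ 2 ≤ 1 - (s.1 0) ^ 2 := by
  rw [← sum_erase_sq s]
  exact Finset.single_le_sum (f := fun j => (s.1 j) ^ 2) (fun j _ => sq_nonneg _)
    (Finset.mem_erase.2 ⟨hi, Finset.mem_univ i⟩)

lemma t_sq_le (s : Sph n) : (s.1 0) ^ 2 ≤ 1 := by
  rw [← sph_sum_sq s]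
  exact Finset.single_le_sum (f := fun j => (s.1 j) ^ 2) (fun j _ => sq_nonneg _)
    (Finset.mem_univ 0)

lemma t_le_one (s : Sph n) : s.1 0 ≤ 1 := by nlinarith [t_sq_le s]

lemma neg_one_le_t (s : Sph n) : -1 ≤ s.1 0 := by nlinarith [t_sq_le s]

lemma eq_base (s : Sph n) (h : s.1 0 = 1) : s = sphBase n := by
  apply Subtype.ext
  ext i
  show s.1 i = EuclideanSpace.single 0 1 i
  rw [EuclideanSpace.single_apply]
  by_cases hi : i = 0
  · subst hi; simp [h]
  · have h1 := coord_sq_le s hi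
    rw [h] at h1
    have h2 := sq_nonneg (s.1 i)
    have : (s.1 i) ^ 2 = 0 := by linarith
    have : s.1 i = 0 := by nlinarith
    simp [hi, this]

/-- Latitude reparametrization. -/
def phiF (t u : ℝ) : ℝ := min (2 * (t + 1) / (u + 1) - 1) 1

lemma phiF_le_one (t u : ℝ) : phiF t u ≤ 1 := min_le_right _ _

lemma neg_one_le_phiF {t u : ℝ} (ht : -1 ≤ t) (hu : 0 ≤ u) : -1 ≤ phiF t u := by
  refine le_min ?_ (by norm_num)
  have h1 : (0 : ℝ) < u + 1 := by linarith
  have : 0 ≤ 2 * (t + 1) / (u + 1) := div_nonneg (by linarith) (by linarith)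
  linarith

lemma phiF_sq_le {t u : ℝ} (ht : -1 ≤ t) (hu : 0 ≤ u) : (phiF t u) ^ 2 ≤ 1 := by
  have h1 := phiF_le_one t u
  have h2 := neg_one_le_phiF ht hu
  nlinarith

lemma phiF_eq_one {t u : ℝ} (hu : 0 ≤ u) (htu : u ≤ t) : phiF t u = 1 := by
  apply min_eq_right
  have h1 : (0 : ℝ) < u + 1 := by linarith
  rw [le_sub_iff_add_le, le_div_iff₀ h1]
  linarith

lemma phiF_one {t : ℝ} (ht : t ≤ 1) : phiF t 1 = t := by
  have h : 2 * (t + 1) / (1 + 1) - 1 = t := by ring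
  rw [phiF, h, min_eq_left ht]

lemma phiF_neg_one (u : ℝ) : phiF (-1) u = -1 := by
  have h : 2 * ((-1 : ℝ) + 1) / (u + 1) - 1 = -1 := by
    simp
  rw [phiF, h]
  exact min_eq_left (by norm_num)

/-- Radial scaling factor. -/
def rrF (t u : ℝ) : ℝ := Real.sqrt ((1 - (phiF t u) ^ 2) / (1 - t ^ 2))

/-- The collapsing self-map of the sphere (as a raw function to Euclidean space). -/
def rhoF (n : ℕ) (s : Sph n) (u : ℝ) : EuclideanSpace ℝ (Fin (n + 1)) :=
  WithLp.toLp 2 (fun i => if i = 0 then phiF (s.1 0) u else rrF (s.1 0) u * s.1 i)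

lemma rhoF_sum (s : Sph n) (u : ℝ) :
    ∑ i, (rhoF n s u i) ^ 2 = (phiF (s.1 0) u) ^ 2 + (rrF (s.1 0) u) ^ 2 * (1 - (s.1 0) ^ 2) := by
  have key := Finset.add_sum_erase Finset.univ (fun i => (rhoF n s u i) ^ 2) (Finset.mem_univ 0)
  simp only at key
  rw [← key]
  have h0 : rhoF n s u 0 = phiF (s.1 0) u := by simp [rhoF]
  rw [h0]
  congr 1
  calc ∑ i ∈ Finset.univ.erase 0, (rhoF n s u i) ^ 2
      = ∑ i ∈ Finset.univ.erase 0, (rrF (s.1 0) u) ^ 2 * (s.1 i) ^ 2 := by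
        refine Finset.sum_congr rfl fun i hi => ?_
        have hi0 := (Finset.mem_erase.1 hi).1
        simp only [rhoF, PiLp.toLp_apply, if_neg hi0]
        ring
    _ = (rrF (s.1 0) u) ^ 2 * (1 - (s.1 0) ^ 2) := by rw [← Finset.mul_sum, sum_erase_sq]

lemma rhoF_mem (s : Sph n) {u : ℝ} (hu0 : 0 ≤ u) (hu1 : u ≤ 1) : rhoF n s u ∈ Sph n := by
  have ht1 := t_le_one s
  have ht2 := neg_one_le_t s
  have hsum : ∑ i, (rhoF n s u i) ^ 2 = 1 := by
    rw [rhoF_sum]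
    by_cases h : 1 - (s.1 0) ^ 2 = 0
    · have hφ : (phiF (s.1 0) u) ^ 2 = 1 := by
        have : (s.1 0 - 1) * (s.1 0 + 1) = 0 := by nlinarith
        rcases mul_eq_zero.1 this with h1 | h1
        · have ht : s.1 0 = 1 := by linarith
          rw [ht, phiF_eq_one hu0 (by linarith)]; norm_num
        · have ht : s.1 0 = -1 := by linarith
          rw [ht, phiF_neg_one]; norm_num
      rw [h, hφ]; ring
    · have harg : 0 ≤ (1 - (phiF (s.1 0) u) ^ 2) / (1 - (s.1 0) ^ 2) := by
        apply div_nonneg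
        · have := phiF_sq_le ht2 hu0; linarith
        · have := t_sq_le s; linarith
      rw [rrF, Real.sq_sqrt harg, div_mul_cancel₀ _ h]
      ring
  show rhoF n s u ∈ Metric.sphere 0 1
  rw [mem_sphere_iff_norm, sub_zero, EuclideanSpace.norm_eq, Real.sqrt_eq_one]
  simpa [Real.norm_eq_abs, sq_abs] using hsum

lemma rhoF_base (s : Sph n) {u : ℝ} (hu0 : 0 ≤ u) (htu : u ≤ s.1 0) :
    rhoF n s u = (sphBase n).1 := by
  ext i
  show rhoF n s u i = EuclideanSpace.single 0 1 i
  rw [EuclideanSpace.single_apply]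
  by_cases hi : i = 0
  · subst hi; simp [rhoF, phiF_eq_one hu0 htu]
  · have h1 : phiF (s.1 0) u = 1 := phiF_eq_one hu0 htu
    simp [rhoF, hi, rrF, h1]

lemma rhoF_one (s : Sph n) : rhoF n s 1 = s.1 := by
  ext i
  by_cases hi : i = 0
  · subst hi; simp [rhoF, phiF_one (t_le_one s)]
  · rcases eq_or_ne (1 - (s.1 0) ^ 2) 0 with h | h
    · have h1 : (s.1 i) ^ 2 ≤ 0 := by have := coord_sq_le s hi; linarith
      have h2 : s.1 i = 0 := by nlinarith [sq_nonneg (s.1 i)]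
      simp [rhoF, hi, h2]
    · have h1 : rrF (s.1 0) 1 = 1 := by
        rw [rrF, phiF_one (t_le_one s), div_self h, Real.sqrt_one]
      simp [rhoF, hi, h1]

lemma continuous_t : Continuous fun s : Sph n => s.1 0 :=
  (PiLp.continuous_apply 2 _ (0 : Fin (n + 1))).comp continuous_subtype_val

lemma continuous_phi :
    Continuous fun p : Sph n × I => phiF (p.1.1 0) (p.2 : ℝ) := by
  refine Continuous.min ?_ continuous_const
  have hden : ∀ p : Sph n × I, ((p.2 : ℝ) + 1) ≠ 0 := fun p =>
    ne_of_gt (by have := p.2.2.1; linarith)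
  exact ((continuous_const.mul
      ((continuous_t.comp continuous_fst).add continuous_const)).div
    ((continuous_subtype_val.comp continuous_snd).add continuous_const) hden).sub
    continuous_const

lemma bound_aux (p : Sph n × I) {i : Fin (n + 1)} (hi : i ≠ 0) :
    ‖rrF (p.1.1 0) (p.2 : ℝ) * p.1.1 i‖ ≤ Real.sqrt (1 - (phiF (p.1.1 0) (p.2 : ℝ)) ^ 2) := by
  set t := p.1.1 0
  set u := (p.2 : ℝ)
  have hφ : 0 ≤ 1 - (phiF t u) ^ 2 := by
    have := phiF_sq_le (neg_one_le_t p.1) p.2.2.1; linarith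
  have ht : 0 ≤ 1 - t ^ 2 := by have := t_sq_le p.1; linarith
  have habs : |p.1.1 i| ≤ Real.sqrt (1 - t ^ 2) := by
    rw [← Real.sqrt_sq_eq_abs]
    exact Real.sqrt_le_sqrt (coord_sq_le p.1 hi)
  have hr : |rrF t u| = rrF t u := abs_of_nonneg (Real.sqrt_nonneg _)
  have h1 : ‖rrF t u * p.1.1 i‖ = rrF t u * |p.1.1 i| := by
    rw [Real.norm_eq_abs, abs_mul, hr]
  rw [h1]
  calc rrF t u * |p.1.1 i| ≤ rrF t u * Real.sqrt (1 - t ^ 2) :=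
        mul_le_mul_of_nonneg_left habs (Real.sqrt_nonneg _)
    _ = Real.sqrt ((1 - (phiF t u) ^ 2) / (1 - t ^ 2) * (1 - t ^ 2)) := by
        rw [rrF, ← Real.sqrt_mul (div_nonneg hφ ht)]
    _ ≤ Real.sqrt (1 - (phiF t u) ^ 2) := by
        apply Real.sqrt_le_sqrt
        rcases eq_or_ne (1 - t ^ 2) 0 with h | h
        · rw [h, mul_zero]; exact hφ
        · rw [div_mul_cancel₀ _ h]

lemma continuous_coord {i : Fin (n + 1)} (hi : i ≠ 0) :
    Continuous fun p : Sph n × I => rrF (p.1.1 0) (p.2 : ℝ) * p.1.1 i := by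
  rw [continuous_iff_continuousAt]
  intro p₀
  by_cases h : 1 - (p₀.1.1 0) ^ 2 = 0
  · have hv : p₀.1.1 i = 0 := by
      have h1 := coord_sq_le p₀.1 hi
      nlinarith [sq_nonneg (p₀.1.1 i)]
    have hval : rrF (p₀.1.1 0) (p₀.2 : ℝ) * p₀.1.1 i = 0 := by rw [hv, mul_zero]
    have hφ0 : (phiF (p₀.1.1 0) (p₀.2 : ℝ)) ^ 2 = 1 := by
      have ht1 := t_le_one p₀.1
      have ht2 := neg_one_le_t p₀.1
      have : (p₀.1.1 0 - 1) * (p₀.1.1 0 + 1) = 0 := by nlinarith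
      rcases mul_eq_zero.1 this with h1 | h1
      · have ht : p₀.1.1 0 = 1 := by linarith
        rw [ht, phiF_eq_one p₀.2.2.1 (by simpa using p₀.2.2.2)]; norm_num
      · have ht : p₀.1.1 0 = -1 := by linarith
        rw [ht, phiF_neg_one]; norm_num
    have h0 : (fun p : Sph n × I => rrF (p.1.1 0) (p.2 : ℝ) * p.1.1 i) p₀ = 0 := hval
    unfold ContinuousAt
    rw [h0]
    apply squeeze_zero_norm (fun p => bound_aux p hi)
    have hc : Continuous fun p : Sph n × I =>
        Real.sqrt (1 - (phiF (p.1.1 0) (p.2 : ℝ)) ^ 2) :=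
      Real.continuous_sqrt.comp (continuous_const.sub (continuous_phi.pow 2))
    have htend := hc.tendsto p₀
    rw [show Real.sqrt (1 - (phiF (p₀.1.1 0) (p₀.2 : ℝ)) ^ 2) = 0 from by
      rw [hφ0]; simp] at htend
    exact htend
  · apply ContinuousAt.mul
    · refine (Real.continuous_sqrt.continuousAt).comp ?_
      exact ContinuousAt.div
        ((continuous_const.sub (continuous_phi.pow 2)).continuousAt)
        ((continuous_const.sub ((continuous_t.comp continuous_fst).pow 2 :
          Continuous fun p : Sph n × I => (p.1.1 0 : ℝ) ^ 2)).continuousAt) h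
    · exact ((PiLp.continuous_apply 2 _ i).comp
        (continuous_subtype_val.comp continuous_fst)).continuousAt

/-- The collapsing map as a continuous map into the sphere. -/
def rhoPt (p : Sph n × I) : Sph n :=
  ⟨rhoF n p.1 p.2, rhoF_mem p.1 p.2.2.1 p.2.2.2⟩

lemma continuous_rhoPt : Continuous (rhoPt (n := n)) := by
  apply Continuous.subtype_mk
  have : Continuous fun p : Sph n × I => (fun i => rhoF n p.1 p.2 i : ∀ _ : Fin (n + 1), ℝ) := by
    apply continuous_pi
    intro i
    by_cases hi : i = 0
    · simp only [rhoF, PiLp.toLp_apply, hi, if_pos]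
      exact continuous_phi
    · simp only [rhoF, PiLp.toLp_apply, if_neg hi]
      exact continuous_coord hi
  exact (PiLp.continuous_toLp 2 _).comp this

/-- Whisker lemma: drag the basepoint of `f` along a path `γ`. -/
theorem whisker {X : Type*} [TopologicalSpace X] {n : ℕ} (f : C(Sph n, X)) {x : X}
    (γ : Path (f (sphBase n)) x) :
    ∃ g : C(Sph n, X), g (sphBase n) = x ∧ g.Homotopic f ∧
      ∀ s, g s ∈ range γ ∪ range f := by
  set F : I × Sph n → X := fun p =>
    if (p.1 : ℝ) ≤ p.2.1 0 then γ.extend (p.2.1 0 - p.1) else f (rhoPt (p.2, p.1)) with hF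
  have hmatch : ∀ p : I × Sph n, (p.1 : ℝ) = p.2.1 0 →
      γ.extend (p.2.1 0 - p.1) = f (rhoPt (p.2, p.1)) := by
    intro p hp
    have h1 : rhoPt (p.2, p.1) = sphBase n :=
      Subtype.ext (rhoF_base p.2 p.1.2.1 (le_of_eq hp))
    rw [h1, show p.2.1 0 - (p.1 : ℝ) = 0 by rw [← hp]; ring, γ.extend_zero]
  have hFc : Continuous F := by
    apply Continuous.if_le
    · exact γ.continuous_extend.comp
        ((continuous_t.comp continuous_snd).sub (continuous_subtype_val.comp continuous_fst))
    · exact f.continuous.comp (continuous_rhoPt.comp (continuous_snd.prodMk continuous_fst))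
    · exact continuous_subtype_val.comp continuous_fst
    · exact continuous_t.comp continuous_snd
    · exact hmatch
  have hgc : Continuous fun s : Sph n => F (0, s) :=
    hFc.comp (continuous_const.prodMk continuous_id)
  set g : C(Sph n, X) := ⟨fun s => F (0, s), hgc⟩ with hg
  have hg1 : g (sphBase n) = x := by
    show F (0, sphBase n) = x
    have hb : (sphBase n).1 0 = 1 := by
      show EuclideanSpace.single (0 : Fin (n+1)) (1:ℝ) 0 = 1
      simp [EuclideanSpace.single_apply]
    rw [hF]
    simp only [hb]
    rw [if_pos (by norm_num : ((0 : I) : ℝ) ≤ 1)]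
    norm_num
  have hH : g.Homotopic f := by
    refine ⟨⟨⟨F, hFc⟩, fun s => rfl, fun s => ?_⟩⟩
    show F (1, s) = f s
    by_cases h : ((1 : I) : ℝ) ≤ s.1 0
    · have ht1 : s.1 0 = 1 := le_antisymm (t_le_one s) (by simpa using h)
      rw [hF]
      simp only
      rw [if_pos h, ht1]
      rw [show (1 : ℝ) - ((1 : I) : ℝ) = 0 by norm_num, γ.extend_zero]
      rw [eq_base s ht1]
    · rw [hF]
      simp only
      rw [if_neg h]
      congr 1
      exact Subtype.ext (rhoF_one s)
  refine ⟨g, hg1, hH, fun s => ?_⟩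
  show F (0, s) ∈ _
  rw [hF]
  simp only
  split_ifs
  · left; rw [← γ.extend_range]; exact mem_range_self _
  · right; exact mem_range_self _

end WildAux

/-- For `n ≥ 1`, if `X` is first countable and locally path-connected,
then `w_n(X) = fw_n(X)`. -/
theorem statement6 (n : ℕ) (hn : 1 ≤ n) (X : Type*) [TopologicalSpace X]
    [FirstCountableTopology X] [LocallyPathConnectedSpace X] :
    wildSet n X = freeWildSet n X := by
  ext x
  simp only [wildSet, freeWildSet, mem_setOf_eq]
  constructor
  · rintro ⟨f, h1, _, h3⟩
    exact ⟨f, h1, h3⟩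
  · rintro ⟨f, hess, hconv⟩
    obtain ⟨U, hU⟩ := (𝓝 x).exists_antitone_basis
    have key : ∀ j : ℕ, ∃ g : C(Sph n, X), Essential g ∧ g (sphBase n) = x ∧
        ∀ s, g s ∈ U j := by
      intro j
      have hUj : U j ∈ 𝓝 x := hU.toHasBasis.mem_of_mem trivial
      obtain ⟨V, ⟨hVmem, hVpc⟩, hVU⟩ := (path_connected_basis x).mem_iff.mp hUj
      obtain ⟨k, hk⟩ := (hconv V hVmem).exists
      obtain ⟨γ, hγ⟩ := hVpc.joinedIn _ (hk (sphBase n)) x (mem_of_mem_nhds hVmem)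
      obtain ⟨g, hg1, hg2, hg3⟩ := WildAux.whisker (f k) γ
      refine ⟨g, ?_, hg1, fun s => hVU ?_⟩
      · intro y hy
        exact hess k y (hg2.symm.trans hy)
      · rcases hg3 s with h | h
        · obtain ⟨t, ht⟩ := h
          rw [← ht]; exact hγ t
        · obtain ⟨z, hz⟩ := h
          rw [← hz]; exact hk z
    choose g hg1 hg2 hg3 using key
    refine ⟨g, hg1, hg2, fun W hW => ?_⟩
    obtain ⟨j₀, -, hj₀⟩ := hU.toHasBasis.mem_iff.mp hW
    filter_upwards [eventually_ge_atTop j₀] with j hj s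
    exact hj₀ (hU.antitone hj (hg3 j s))
end
end
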